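/- Let H₄⁽⁻⁾ be the 4-dimensional Lie algebra over a field k (char k ≠ 2) with basis 1, g, e, f, brackets [1,·] = 0, [g,e] = 2e, [g,f] = −2f, [e,f] = 0, and let λ ∈ k. The linear operator R defined by R(1) = 0, R(g) = 0, R(e) = α·1 − λe, R(f) = α₁·1 − λf (for any α, α₁ ∈ k) is a Rota–Baxter operator of weight λ on H₄⁽⁻⁾. -/

import Mathlib

/-!
On `H₄⁽⁻⁾` both `span {1, g}` and `span {e, f}` are abelian, and `R` differs from `-λ` times the
projection `P` onto `span {e, f}` by a map into the centre `k·1`. Hence `⁅R a, x⁆ = -λ ⁅P a, x⁆`,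
so `⁅R a, R c⁆ = λ² ⁅P a, P c⁆ = 0`, while
`⁅R a, c⁆ + ⁅a, R c⁆ + λ ⁅a, c⁆ = λ (⁅a - P a, c - P c⁆ - ⁅P a, P c⁆) = 0`;
both sides of the Rota–Baxter identity vanish.
-/

section

variable {k L : Type*} [CommRing k] [LieRing L] [LieAlgebra k L]

def IsRotaBaxter (R : L →ₗ[k] L) (lam : k) : Prop :=
  ∀ a c : L, ⁅R a, R c⁆ = R (⁅R a, c⁆ + ⁅a, R c⁆ + lam • ⁅a, c⁆)

theorem isRotaBaxter_of_abelian_split (R : L →ₗ[k] L) (lam : k) (P : L → L)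
    (hP : ∀ a c, ⁅P a, P c⁆ = 0) (hsub : ∀ a c, ⁅a - P a, c - P c⁆ = 0)
    (hcentral : ∀ a (x : L), ⁅R a + lam • P a, x⁆ = 0) : IsRotaBaxter R lam := by
  have hR : ∀ a (x : L), ⁅R a, x⁆ = -(lam • ⁅P a, x⁆) := fun a x =>
    eq_neg_of_add_eq_zero_left (by rw [← smul_lie, ← add_lie, hcentral])
  intro a c
  have hlhs : ⁅R a, R c⁆ = 0 := by
    rw [hR, ← lie_skew, hR, hP]
    simp
  have hbracket : ⁅a, c⁆ = ⁅P a, c⁆ + ⁅a, P c⁆ := by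
    have := hsub a c
    simp only [sub_lie, lie_sub, hP, sub_zero] at this
    rw [← sub_eq_zero, ← this]
    abel
  have hsum : ⁅R a, c⁆ + ⁅a, R c⁆ + lam • ⁅a, c⁆ = 0 := by
    rw [hR, ← lie_skew a (R c), hR, ← lie_skew (P c) a, hbracket]
    module
  rw [hlhs, hsum, map_zero]

theorem lie_eq_zero_of_basis {ι : Type*} (b : Module.Basis ι k L) {z : L}
    (hz : ∀ i, ⁅z, b i⁆ = 0) (x : L) : ⁅z, x⁆ = 0 := by
  have : LieAlgebra.ad k L z = 0 := b.ext fun i => hz i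
  simpa using LinearMap.congr_fun this x

end

theorem RB_on_H4_general {k : Type*} [Field k]
    {L : Type*} [LieRing L] [LieAlgebra k L] (b : Module.Basis (Fin 4) k L)
    (h1g : ⁅b 0, b 1⁆ = 0) (h1e : ⁅b 0, b 2⁆ = 0) (h1f : ⁅b 0, b 3⁆ = 0)
    (hef : ⁅b 2, b 3⁆ = 0)
    (lam α α₁ : k) (R : L →ₗ[k] L)
    (hR1 : R (b 0) = 0) (hRg : R (b 1) = 0)
    (hRe : R (b 2) = α • b 0 - lam • b 2)
    (hRf : R (b 3) = α₁ • b 0 - lam • b 3) :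
    ∀ a c : L, ⁅R a, R c⁆ = R (⁅R a, c⁆ + ⁅a, R c⁆ + lam • ⁅a, c⁆) := by
  let Q : L → L := fun a => b.repr a 0 • b 0 + b.repr a 1 • b 1
  let P : L → L := fun a => b.repr a 2 • b 2 + b.repr a 3 • b 3
  have hQP : ∀ a, Q a + P a = a := fun a => by
    conv_rhs => rw [← b.sum_repr a, Fin.sum_univ_four]
    simp only [Q, P]
    abel
  have hRP : ∀ a, R a + lam • P a = (b.repr a 2 * α + b.repr a 3 * α₁) • b 0 := fun a => by
    conv_lhs => enter [1, 2]; rw [← hQP a]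
    simp only [Q, P, map_add, map_smul, hR1, hRg, hRe, hRf]
    module
  have h1_central : ∀ x : L, ⁅b 0, x⁆ = 0 :=
    lie_eq_zero_of_basis b fun i => by fin_cases i <;> simp [h1g, h1e, h1f]
  refine isRotaBaxter_of_abelian_split R lam P (fun a c => ?_) (fun a c => ?_) (fun a x => ?_)
  · simp [P, lie_add, add_lie, lie_smul, smul_lie, hef, ← lie_skew (b 3) (b 2)]
  · rw [← eq_sub_of_add_eq (hQP a), ← eq_sub_of_add_eq (hQP c)]
    simp [Q, lie_add, add_lie, lie_smul, smul_lie, h1g, ← lie_skew (b 1) (b 0)]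
  · rw [hRP, smul_lie, h1_central, smul_zero]

/-- On `H₄⁽⁻⁾`, the operator `R(1) = 0`, `R(g) = 0`, `R(e) = α·1 - λe`,
`R(f) = α₁·1 - λf` is a Rota–Baxter operator of weight `lam`. -/
theorem RB_on_H4 {k : Type*} [Field k] (h2 : (2 : k) ≠ 0)
    {L : Type*} [LieRing L] [LieAlgebra k L] (b : Module.Basis (Fin 4) k L)
    (h1g : ⁅b 0, b 1⁆ = 0) (h1e : ⁅b 0, b 2⁆ = 0) (h1f : ⁅b 0, b 3⁆ = 0)
    (hge : ⁅b 1, b 2⁆ = (2 : k) • b 2) (hgf : ⁅b 1, b 3⁆ = -((2 : k) • b 3))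
    (hef : ⁅b 2, b 3⁆ = 0)
    (lam α α₁ : k) (R : L →ₗ[k] L)
    (hR1 : R (b 0) = 0) (hRg : R (b 1) = 0)
    (hRe : R (b 2) = α • b 0 - lam • b 2)
    (hRf : R (b 3) = α₁ • b 0 - lam • b 3) :
    ∀ a c : L, ⁅R a, R c⁆ = R (⁅R a, c⁆ + ⁅a, R c⁆ + lam • ⁅a, c⁆) :=
  RB_on_H4_general b h1g h1e h1f hef lam α α₁ R hR1 hRg hRe hRf
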